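/- arXiv:2201.11378 — 3 statements merged into one kernel-verified Lean document; each statement's English description precedes it below -/
import Mathlib

section
/- Let k be a field of characteristic zero and r(t) ∈ k(t) a non-constant rational function. Then deg(r) − 1 ≤ deg(r') ≤ 2·deg(r), where r' is the derivative of r with respect to t and deg(p/q) = max(deg p, deg q) for coprime p,q. -/
open Polynomial

noncomputable def degR {k : Type*} [Field k] (r : RatFunc k) : ℕ :=
  max r.num.natDegree r.denom.natDegree

noncomputable def rderiv {k : Type*} [Field k] (r : RatFunc k) : RatFunc k :=
  (algebraMap (Polynomial k) (RatFunc k) (Polynomial.derivative r.num) *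
      algebraMap (Polynomial k) (RatFunc k) r.denom -
    algebraMap (Polynomial k) (RatFunc k) r.num *
      algebraMap (Polynomial k) (RatFunc k) (Polynomial.derivative r.denom)) /
  (algebraMap (Polynomial k) (RatFunc k) r.denom) ^ 2

/-!
Write `r = p / q` in lowest terms. Then `r' = W / q ^ 2` with `W = q p' - q' p` the Wronskian,
and the reduced form of `r'` is obtained by cancelling `g = gcd W (q ^ 2)`. The upper bound
comes from `deg W ≤ deg p + deg q`. For the lower bound, the point is that `g ∣ q'`: if `π ^ e`
is the exact power of a prime `π` dividing `q` (`e ≥ 1`), then in characteristic zero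
`π ^ e ∤ q'`, whereas `π ^ e ∣ W` would force `π ^ e ∣ q' p`, hence `π ^ e ∣ q'`. So
`deg g < deg q` and the denominator of `r'` has degree `> deg q`; and if `deg p > deg q`, the
coefficient of `W` in degree `deg p + deg q - 1` is `(deg p - deg q) lc(p) lc(q) ≠ 0`, so the
numerator has degree `≥ deg p`.
-/

namespace Polynomial

section CommRing

variable {R : Type*} [CommRing R]

theorem coeff_derivative_mul_natDegree_add_sub_one (f g : R[X]) :
    (derivative f * g).coeff (f.natDegree + g.natDegree - 1) =
      f.natDegree * f.leadingCoeff * g.leadingCoeff := by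
  rcases Nat.eq_zero_or_pos f.natDegree with hf | hf
  · simp [derivative_of_natDegree_zero hf, hf]
  · have hidx : f.natDegree + g.natDegree - 1 = (f.natDegree - 1) + g.natDegree := by omega
    rw [hidx, coeff_mul_add_eq_of_natDegree_le (natDegree_derivative_le f) le_rfl,
      coeff_derivative, Nat.sub_add_cancel hf, Nat.cast_sub hf, Nat.cast_one, sub_add_cancel,
      leadingCoeff, leadingCoeff]
    ring

theorem coeff_wronskian_natDegree_add_sub_one (a b : R[X]) :
    (wronskian a b).coeff (a.natDegree + b.natDegree - 1) =
      (b.natDegree - a.natDegree : R) * a.leadingCoeff * b.leadingCoeff := by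
  rw [wronskian, coeff_sub, mul_comm a, add_comm a.natDegree,
    coeff_derivative_mul_natDegree_add_sub_one, add_comm b.natDegree,
    coeff_derivative_mul_natDegree_add_sub_one]
  ring

theorem natDegree_wronskian_le (a b : R[X]) :
    (wronskian a b).natDegree ≤ a.natDegree + b.natDegree := by
  rcases eq_or_ne (wronskian a b) 0 with hw | hw
  · simp [hw]
  · exact (natDegree_wronskian_lt_add hw).le

theorem natDegree_wronskian_of_natDegree_ne [IsDomain R] [CharZero R] {a b : R[X]}
    (ha : a ≠ 0) (hb : b ≠ 0) (hab : a.natDegree ≠ b.natDegree) :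
    (wronskian a b).natDegree = a.natDegree + b.natDegree - 1 := by
  have hcoeff : (wronskian a b).coeff (a.natDegree + b.natDegree - 1) ≠ 0 := by
    rw [coeff_wronskian_natDegree_add_sub_one]
    exact mul_ne_zero (mul_ne_zero (sub_ne_zero.mpr (Nat.cast_injective.ne hab.symm))
      (leadingCoeff_ne_zero.mpr ha)) (leadingCoeff_ne_zero.mpr hb)
  have hw : wronskian a b ≠ 0 := fun h => hcoeff (by simp [h])
  exact le_antisymm (Nat.le_sub_one_of_lt (natDegree_wronskian_lt_add hw))
    (le_natDegree_of_ne_zero hcoeff)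

end CommRing

variable {k : Type*} [Field k]

theorem natDegree_div_of_dvd {p g : k[X]} (hg : g ≠ 0) (hgp : g ∣ p) :
    (p / g).natDegree = p.natDegree - g.natDegree := by
  obtain ⟨c, rfl⟩ := hgp
  rcases eq_or_ne c 0 with rfl | hc
  · simp
  · rw [mul_div_cancel_left₀ _ hg, natDegree_mul hg hc]
    omega

variable [CharZero k]

theorem pow_succ_dvd_of_pow_dvd_derivative {π q : k[X]} {e : ℕ} (hπ : Prime π) (he : e ≠ 0)
    (hq : π ^ e ∣ q) (hq' : π ^ e ∣ derivative q) : π ^ (e + 1) ∣ q := by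
  obtain ⟨n, rfl⟩ : ∃ n, e = n + 1 := ⟨e - 1, by omega⟩
  obtain ⟨u, rfl⟩ := hq
  have hπ' : ¬π ∣ derivative π := by
    rw [dvd_derivative_iff, derivative_eq_zero]
    exact (natDegree_pos_iff_degree_pos.mpr (degree_pos_of_irreducible hπ.irreducible)).ne'
  have hdvd : π ^ n * π ∣ π ^ n * (C ((n + 1 : ℕ) : k) * derivative π * u) := by
    rw [← pow_succ, ← (dvd_add_left (dvd_mul_right (π ^ (n + 1)) (derivative u)))]
    convert hq' using 1
    rw [derivative_mul, derivative_pow_succ]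
    push_cast
    ring
  rw [mul_dvd_mul_iff_left (pow_ne_zero n hπ.ne_zero), mul_assoc,
    dvd_C_mul (Nat.cast_ne_zero.mpr n.succ_ne_zero)] at hdvd
  rw [pow_succ]
  exact mul_dvd_mul_left _ ((hπ.dvd_or_dvd hdvd).resolve_left hπ')

theorem pow_dvd_derivative_of_pow_dvd_wronskian {p q π : k[X]} {i n : ℕ} (hpq : IsCoprime p q)
    (hπ : Prime π) (hq : π ^ i ∣ q ^ n) (hw : π ^ i ∣ wronskian q p) :
    π ^ i ∣ derivative q := by
  rcases eq_or_ne q 0 with rfl | hq0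
  · simp
  set e := multiplicity π q
  have hfin : FiniteMultiplicity π q := .of_prime_left hπ hq0
  by_cases hie : i ≤ e - 1
  · exact (pow_dvd_pow π hie).trans
      (pow_sub_one_dvd_derivative_of_pow_dvd (pow_multiplicity_dvd π q))
  have hπq : π ∣ q := hπ.dvd_of_dvd_pow ((dvd_pow_self π (by omega)).trans hq)
  have he : e ≠ 0 := (multiplicity_pos_of_dvd hπq).ne'
  have hπe : π ^ e ∣ q := pow_multiplicity_dvd π q
  have hπe' : π ^ e ∣ derivative q := by
    refine (hpq.of_isCoprime_of_dvd_right hπe).symm.dvd_of_dvd_mul_right ?_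
    have : derivative q * p = q * derivative p - wronskian q p := by rw [wronskian]; ring
    rw [this]
    exact dvd_sub (hπe.mul_right _) ((pow_dvd_pow π (by omega)).trans hw)
  exact (hfin.not_pow_dvd_of_multiplicity_lt (Nat.lt_succ_self e)
    (pow_succ_dvd_of_pow_dvd_derivative hπ he hπe hπe')).elim

theorem dvd_derivative_of_dvd_wronskian {p q g : k[X]} {n : ℕ} (hpq : IsCoprime p q)
    (hq : g ∣ q ^ n) (hw : g ∣ wronskian q p) : g ∣ derivative q := by
  induction g using UniqueFactorizationMonoid.induction_on_coprime with
  | h0 => simp [eq_zero_of_pow_eq_zero (zero_dvd_iff.mp hq)]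
  | h1 hu => exact hu.dvd
  | hpr i hπ => exact pow_dvd_derivative_of_pow_dvd_wronskian hpq hπ hq hw
  | hcp hxy hx hy =>
    exact hxy.mul_dvd (hx (dvd_of_mul_right_dvd hq) (dvd_of_mul_right_dvd hw))
      (hy (dvd_of_mul_left_dvd hq) (dvd_of_mul_left_dvd hw))

theorem natDegree_le_natDegree_sub_one_of_dvd_wronskian {p q g : k[X]} {n : ℕ}
    (hpq : IsCoprime p q) (hq0 : q ≠ 0) (hq : g ∣ q ^ n) (hw : g ∣ wronskian q p) :
    g.natDegree ≤ q.natDegree - 1 := by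
  rcases eq_or_ne (derivative q) 0 with hq' | hq'
  · have hq'' := derivative_eq_zero.mp hq'
    have := natDegree_le_of_dvd hq (pow_ne_zero n hq0)
    rw [natDegree_pow, hq''] at this
    omega
  · exact (natDegree_le_of_dvd (dvd_derivative_of_dvd_wronskian hpq hq hw) hq').trans
      (natDegree_derivative_le q)

end Polynomial

namespace RatFunc

variable {K : Type*} [Field K]

open scoped Classical in
theorem natDegree_num_div (p q : K[X]) :
    (num (algebraMap K[X] (RatFunc K) p / algebraMap K[X] (RatFunc K) q)).natDegree =
      p.natDegree - (gcd p q).natDegree := by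
  rcases eq_or_ne q 0 with rfl | hq
  · simp [natDegree_eq_of_degree_eq degree_normalize]
  rw [num_div,
    natDegree_C_mul (inv_ne_zero (leadingCoeff_ne_zero.mpr (right_div_gcd_ne_zero hq))),
    natDegree_div_of_dvd (gcd_ne_zero_of_right hq) (gcd_dvd_left p q)]

open scoped Classical in
theorem natDegree_denom_div (p : K[X]) {q : K[X]} (hq : q ≠ 0) :
    (denom (algebraMap K[X] (RatFunc K) p / algebraMap K[X] (RatFunc K) q)).natDegree =
      q.natDegree - (gcd p q).natDegree := by
  rw [denom_div p hq,
    natDegree_C_mul (inv_ne_zero (leadingCoeff_ne_zero.mpr (right_div_gcd_ne_zero hq))),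
    natDegree_div_of_dvd (gcd_ne_zero_of_right hq) (gcd_dvd_right p q)]

end RatFunc

theorem rderiv_eq_div_wronskian {k : Type*} [Field k] (r : RatFunc k) :
    rderiv r = algebraMap k[X] (RatFunc k) (wronskian r.denom r.num) /
      algebraMap k[X] (RatFunc k) (r.denom ^ 2) := by
  simp only [rderiv, wronskian, map_sub, map_mul, map_pow]
  ring

theorem stmt_1_general {k : Type*} [Field k] [CharZero k]
    (r : RatFunc k) :
    degR r - 1 ≤ degR (rderiv r) ∧ degR (rderiv r) ≤ 2 * degR r := by
  classical
  have hq0 : r.denom ≠ 0 := r.denom_ne_zero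
  have hnum := RatFunc.natDegree_num_div (wronskian r.denom r.num) (r.denom ^ 2)
  have hden := RatFunc.natDegree_denom_div (wronskian r.denom r.num) (pow_ne_zero 2 hq0)
  rw [← rderiv_eq_div_wronskian] at hnum hden
  rw [natDegree_pow] at hden
  have hgcd := natDegree_le_natDegree_sub_one_of_dvd_wronskian r.isCoprime_num_denom hq0
    (gcd_dvd_right _ (r.denom ^ 2)) (gcd_dvd_left _ _)
  have hle := natDegree_wronskian_le r.denom r.num
  have heq (hlt : r.denom.natDegree < r.num.natDegree) :=
    natDegree_wronskian_of_natDegree_ne hq0 (fun h => by simp [h] at hlt) hlt.ne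
  unfold degR
  omega

theorem stmt_1 {k : Type*} [Field k] [CharZero k]
    (r : RatFunc k) (hr : ∀ c : k, r ≠ RatFunc.C c) :
    degR r - 1 ≤ degR (rderiv r) ∧ degR (rderiv r) ≤ 2 * degR r :=
  stmt_1_general r
end

section
/- Let f(y,y') = Σ_{i,j} c_{i,j} y^i (y')^j ∈ k(t)[y,y'] with m = deg(f,y), n = deg(f,y'), and suppose mj + ni ≤ mn whenever c_{i,j} ≠ 0, and m > 2n. If r(t) ∈ k(t) is a non-constant rational function with f(r(t), r'(t)) = 0, then deg(r(t)) ≤ m·n·𝔥(f)/(m − 2n), assuming the height comparison result: for all a,b ∈ k(t)-algebraic closure with f(a,b)=0, m·𝔥(a) − mn·𝔥(f) ≤ n·𝔥(b) ≤ m·𝔥(a) + mn·𝔥(f). -/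
open Polynomial

theorem stmt_8 {k : Type*} [Field k] [IsAlgClosed k] [CharZero k]
    (m n : ℕ) (c : ℕ → ℕ → RatFunc k)
    (hsupp : ∀ i j, c i j ≠ 0 → i ≤ m ∧ j ≤ n)
    (hdegy : ∃ j, c m j ≠ 0) (hdegy' : ∃ i, c i n ≠ 0)
    (hcond : ∀ i j, c i j ≠ 0 → m * j + n * i ≤ m * n)
    (hmn : 2 * n < m)
    (H : AlgebraicClosure (RatFunc k) → ℚ)
    (hH : ∀ s : RatFunc k, H (algebraMap (RatFunc k) (AlgebraicClosure (RatFunc k)) s) = degR s)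
    (hf : ℚ) (hf0 : 0 ≤ hf)
    (hineq : ∀ a b : AlgebraicClosure (RatFunc k),
      (∑ i ∈ Finset.range (m + 1), ∑ j ∈ Finset.range (n + 1),
          algebraMap (RatFunc k) (AlgebraicClosure (RatFunc k)) (c i j) * a ^ i * b ^ j) = 0 →
      (m : ℚ) * H a - (m : ℚ) * n * hf ≤ (n : ℚ) * H b ∧
        (n : ℚ) * H b ≤ (m : ℚ) * H a + (m : ℚ) * n * hf)
    (hlem : ∀ s : RatFunc k, degR (rderiv s) ≤ 2 * degR s)
    (r : RatFunc k) (hr : ∀ c0 : k, r ≠ RatFunc.C c0)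
    (hsol : (∑ i ∈ Finset.range (m + 1), ∑ j ∈ Finset.range (n + 1),
        c i j * r ^ i * (rderiv r) ^ j) = 0) :
    (degR r : ℚ) ≤ (m : ℚ) * n * hf / ((m : ℚ) - 2 * n) := by
  have hm : 2 * (n:ℚ) < m := by exact_mod_cast hmn
  have hpos : (0:ℚ) < (m:ℚ) - 2 * n := by linarith
  set φ := algebraMap (RatFunc k) (AlgebraicClosure (RatFunc k)) with hφ
  have hsol' : (∑ i ∈ Finset.range (m + 1), ∑ j ∈ Finset.range (n + 1),
      φ (c i j) * (φ r) ^ i * (φ (rderiv r)) ^ j) = 0 := by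
    have := congrArg φ hsol
    simpa [map_sum, map_mul, map_pow] using this
  obtain ⟨h1, _⟩ := hineq (φ r) (φ (rderiv r)) hsol'
  rw [hH, hH] at h1
  have h2 : (degR (rderiv r) : ℚ) ≤ 2 * degR r := by exact_mod_cast hlem r
  have h3 : (n:ℚ) * degR (rderiv r) ≤ (n:ℚ) * (2 * degR r) := by
    apply mul_le_mul_of_nonneg_left h2 (by positivity)
  have key : ((m:ℚ) - 2 * n) * degR r ≤ (m:ℚ) * n * hf := by nlinarith
  rw [le_div_iff₀ hpos]
  linarith [key]
end

section
/- Every rational solution r(t) ∈ ℚ(t) (or k(t), k algebraically closed of characteristic 0) of the ODE t·y·y' + y³ + 1 = 0 is a constant c satisfying c³ + 1 = 0. -/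
open Polynomial

/-! Write `r = p / q` in lowest terms with `q` monic. Clearing denominators gives
`X p W(q, p) + p³ + q³ = 0`, so `p ∣ q³`, and coprimality makes `p` a constant `c`.
Then `q³ = c² X q' - c³` has degree at most `deg q`, forcing `q = 1`, and `c³ + 1 = 0`. -/

theorem rderiv_eq_wronskian {k : Type*} [Field k] (r : RatFunc k) :
    rderiv r = algebraMap k[X] (RatFunc k) (wronskian r.denom r.num) /
      algebraMap k[X] (RatFunc k) r.denom ^ 2 := by
  rw [rderiv, wronskian, map_sub, map_mul, map_mul, mul_comm (algebraMap _ _ r.denom),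
    mul_comm (algebraMap _ _ r.num)]

theorem num_denom_cleared_of_solution {k : Type*} [Field k] (r : RatFunc k)
    (hsol : RatFunc.X * r * rderiv r + r ^ 3 + 1 = 0) :
    X * r.num * wronskian r.denom r.num + r.num ^ 3 + r.denom ^ 3 = 0 := by
  have hq : algebraMap k[X] (RatFunc k) r.denom ≠ 0 := by simpa using r.denom_ne_zero
  have hr := r.num_div_denom
  rw [rderiv_eq_wronskian] at hsol
  generalize r.num = p, r.denom = q at *
  subst hr
  field_simp at hsol
  apply IsFractionRing.injective k[X] (RatFunc k)
  simp only [map_add, map_mul, map_pow, RatFunc.algebraMap_X, map_zero]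
  linear_combination hsol

theorem natDegree_X_mul_derivative_le {R : Type*} [Semiring R] (q : R[X]) :
    (X * derivative q).natDegree ≤ q.natDegree := by
  rcases Nat.eq_zero_or_pos q.natDegree with hq | hq
  · rw [derivative_of_natDegree_zero hq, mul_zero, natDegree_zero]
    exact Nat.zero_le _
  · have := natDegree_derivative_lt hq.ne'
    calc (X * derivative q).natDegree ≤ 1 + (derivative q).natDegree :=
          natDegree_mul_le.trans (by gcongr; exact natDegree_X_le)
      _ ≤ q.natDegree := by omega

theorem natDegree_eq_zero_of_pow_eq {R : Type*} [CommRing R] [IsDomain R] {q : R[X]} {n : ℕ}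
    (hn : 2 ≤ n) {a b : R} (h : q ^ n = C a * (X * derivative q) + C b) :
    q.natDegree = 0 := by
  have hle : (q ^ n).natDegree ≤ q.natDegree := by
    rw [h]
    refine (natDegree_add_le _ _).trans (max_le ?_ (by simp))
    exact natDegree_C_mul_le _ _ |>.trans (natDegree_X_mul_derivative_le q)
  rw [natDegree_pow] at hle
  nlinarith

theorem exists_eq_C_of_cleared {k : Type*} [Field k] {p q : k[X]} (hq : q.Monic)
    (hpq : IsCoprime p q) (h : X * p * wronskian q p + p ^ 3 + q ^ 3 = 0) :
    ∃ c : k, p = C c ∧ q = 1 ∧ c ^ 3 + 1 = 0 := by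
  have hp : IsUnit p := (hpq.pow_right (n := 3)).isUnit_of_dvd
    ⟨-(X * wronskian q p + p ^ 2), by linear_combination h⟩
  obtain ⟨c, -, rfl⟩ := Polynomial.isUnit_iff.mp hp
  have hq1 : q = 1 := by
    refine hq.natDegree_eq_zero.mp (natDegree_eq_zero_of_pow_eq (n := 3) (by norm_num)
      (a := c ^ 2) (b := - c ^ 3) ?_)
    simp only [wronskian, derivative_C, mul_zero] at h
    simp only [map_pow, map_neg]
    linear_combination h
  subst hq1
  refine ⟨c, rfl, rfl, C_injective ?_⟩
  simp only [wronskian, derivative_C, derivative_one, mul_zero] at h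
  simp only [map_add, map_pow, map_one, map_zero]
  linear_combination h

theorem stmt_17_general {k : Type*} [Field k]
    (r : RatFunc k)
    (hsol : RatFunc.X * r * rderiv r + r ^ 3 + 1 = 0) :
    ∃ c : k, r = RatFunc.C c ∧ c ^ 3 + 1 = 0 := by
  obtain ⟨c, hp, hq, hc⟩ :=
    exists_eq_C_of_cleared r.monic_denom r.isCoprime_num_denom
      (num_denom_cleared_of_solution r hsol)
  refine ⟨c, ?_, hc⟩
  rw [← RatFunc.num_div_denom r, hp, hq, map_one, div_one, RatFunc.algebraMap_C]

theorem stmt_17 {k : Type*} [Field k] [IsAlgClosed k] [CharZero k]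
    (r : RatFunc k)
    (hsol : RatFunc.X * r * rderiv r + r ^ 3 + 1 = 0) :
    ∃ c : k, r = RatFunc.C c ∧ c ^ 3 + 1 = 0 :=
  stmt_17_general r hsol
end
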